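/- Consider the triangular array X_{j,n} := n for 1 ≤ j < n^{1/3} and arbitrary values in [0,1] for n^{1/3} ≤ j ≤ n. Let m_{n,t} denote the median (1/2-quantile, defined as the generalized inverse at 1/2) of the empirical distribution function of X_{1,n},…,X_{⌊nt⌋,n}. Then for t_n = n^{−3/4}, one has m_{n,t_n} = n for all large n, and consequently √n · t_n · (m_{n,t_n} − m) = n^{−1/4}(n − m) → ∞ for any fixed real m; hence the weighted sequential median process √n t (m_{n,t} − m) is unbounded over t ∈ (0,1] and cannot converge weakly in ℓ^∞. -/
import Mathlib


open Filter Topology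

/-- Example 3 of the paper: for the triangular array X_{j,n} = n for
1 ≤ j < n^{1/3} and X_{j,n} ∈ [0,1] otherwise, the median of the empirical
distribution function of the first ⌊n t⌋ observations equals n along
t_n = n^{-3/4} for large n, the normalized quantity √n t_n (m_{n,t_n} − m)
diverges, and hence the weighted sequential median process is unbounded over
t ∈ (0,1]. -/
theorem sequential_median_counterexample
    (X : ℕ → ℕ → ℝ)
    (hbig : ∀ n j : ℕ, 1 ≤ j → (j : ℝ) < (n : ℝ) ^ ((1 : ℝ) / 3) → X n j = n)
    (hsmall : ∀ n j : ℕ, (n : ℝ) ^ ((1 : ℝ) / 3) ≤ (j : ℝ) → X n j ∈ Set.Icc (0 : ℝ) 1)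
    (m : ℕ → ℝ → ℝ)
    (hm : ∀ n : ℕ, ∀ t : ℝ, m n t = sInf {y : ℝ |
      ((⌊(n : ℝ) * t⌋₊ : ℝ)) / 2 ≤
        (((Finset.Icc 1 ⌊(n : ℝ) * t⌋₊).filter (fun i => X n i ≤ y)).card : ℝ)}) :
    (∃ N : ℕ, ∀ n ≥ N, m n ((n : ℝ) ^ (-(3 : ℝ) / 4)) = n) ∧
    (∀ mfix : ℝ, Tendsto
      (fun n : ℕ => Real.sqrt n * (n : ℝ) ^ (-(3 : ℝ) / 4) *
        (m n ((n : ℝ) ^ (-(3 : ℝ) / 4)) - mfix)) atTop atTop) ∧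
    (∀ mfix M : ℝ, ∃ N : ℕ, ∀ n ≥ N, ∃ t ∈ Set.Ioc (0 : ℝ) 1,
      M < Real.sqrt n * t * (m n t - mfix)) := by
  have key : ∀ n : ℕ, 2 ≤ n → m n ((n : ℝ) ^ (-(3 : ℝ) / 4)) = n := by
    intro n hn
    have hn1 : (1 : ℝ) < (n : ℝ) := by exact_mod_cast hn.trans_lt' one_lt_two
    have hn0 : (0 : ℝ) < (n : ℝ) := by linarith
    have hnt : (n : ℝ) * (n : ℝ) ^ (-(3 : ℝ) / 4) = (n : ℝ) ^ ((1 : ℝ) / 4) := by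
      have : (n : ℝ) ^ ((1 : ℝ) + -(3 : ℝ) / 4) = (n : ℝ) * (n : ℝ) ^ (-(3 : ℝ) / 4) := by
        rw [Real.rpow_add hn0, Real.rpow_one]
      rw [← this]; norm_num
    set k := ⌊(n : ℝ) ^ ((1 : ℝ) / 4)⌋₊ with hk
    have hk1 : 1 ≤ k := by
      apply Nat.le_floor
      have : (1 : ℝ) ≤ (n : ℝ) ^ ((1 : ℝ) / 4) :=
        Real.one_le_rpow hn1.le (by norm_num)
      exact_mod_cast this
    have hklt : (k : ℝ) < (n : ℝ) ^ ((1 : ℝ) / 3) :=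
      lt_of_le_of_lt (Nat.floor_le (by positivity))
        (Real.rpow_lt_rpow_of_exponent_lt hn1 (by norm_num))
    have hX : ∀ i ∈ Finset.Icc 1 k, X n i = n := by
      intro i hi
      obtain ⟨hi1, hi2⟩ := Finset.mem_Icc.mp hi
      exact hbig n i hi1 (lt_of_le_of_lt (by exact_mod_cast hi2) hklt)
    have hcard : ((Finset.Icc 1 k).card : ℝ) = k := by
      rw [Nat.card_Icc]; norm_num
    have hset : {y : ℝ | ((⌊(n : ℝ) * (n : ℝ) ^ (-(3 : ℝ) / 4)⌋₊ : ℝ)) / 2 ≤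
        (((Finset.Icc 1 ⌊(n : ℝ) * (n : ℝ) ^ (-(3 : ℝ) / 4)⌋₊).filter
          (fun i => X n i ≤ y)).card : ℝ)} = Set.Ici (n : ℝ) := by
      rw [hnt]
      ext y
      simp only [Set.mem_setOf_eq, Set.mem_Ici, ← hk]
      constructor
      · intro h
        by_contra hy
        push_neg at hy
        have hemp : (Finset.Icc 1 k).filter (fun i => X n i ≤ y) = ∅ := by
          apply Finset.filter_false_of_mem
          intro i hi
          rw [hX i hi]
          exact not_le.mpr hy
        rw [hemp] at h
        simp only [Finset.card_empty, Nat.cast_zero] at h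
        have : (1 : ℝ) ≤ (k : ℝ) := by exact_mod_cast hk1
        linarith
      · intro h
        have hfull : (Finset.Icc 1 k).filter (fun i => X n i ≤ y) = Finset.Icc 1 k :=
          Finset.filter_true_of_mem (fun i hi => by rw [hX i hi]; exact h)
        rw [hfull, hcard]
        have : (0 : ℝ) ≤ (k : ℝ) := by positivity
        linarith
    rw [hm, hset, csInf_Ici]
  have hdiv : ∀ mfix : ℝ, Tendsto
      (fun n : ℕ => Real.sqrt n * (n : ℝ) ^ (-(3 : ℝ) / 4) *
        (m n ((n : ℝ) ^ (-(3 : ℝ) / 4)) - mfix)) atTop atTop := by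
    intro mfix
    have h34 : Tendsto (fun n : ℕ => ((n : ℝ)) ^ ((3 : ℝ) / 4) / 2) atTop atTop :=
      Tendsto.atTop_div_const two_pos
        ((tendsto_rpow_atTop (by norm_num)).comp tendsto_natCast_atTop_atTop)
    apply tendsto_atTop_mono' atTop _ h34
    have h2 : ∀ᶠ n : ℕ in atTop, 2 * mfix ≤ (n : ℝ) :=
      tendsto_natCast_atTop_atTop.eventually_ge_atTop (2 * mfix)
    filter_upwards [eventually_ge_atTop 2, h2] with n hn hmf
    have hn1 : (1 : ℝ) < (n : ℝ) := by exact_mod_cast hn.trans_lt' one_lt_two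
    have hn0 : (0 : ℝ) < (n : ℝ) := by linarith
    rw [key n hn]
    have e1 : Real.sqrt n * (n : ℝ) ^ (-(3 : ℝ) / 4) = (n : ℝ) ^ (-(1 : ℝ) / 4) := by
      rw [Real.sqrt_eq_rpow, ← Real.rpow_add hn0]
      norm_num
    have e2 : (n : ℝ) ^ (-(1 : ℝ) / 4) * (n : ℝ) = (n : ℝ) ^ ((3 : ℝ) / 4) := by
      rw [show ((3 : ℝ) / 4) = -(1 : ℝ) / 4 + 1 by norm_num, Real.rpow_add hn0,
        Real.rpow_one]
    have hp : (0 : ℝ) < (n : ℝ) ^ (-(1 : ℝ) / 4) := Real.rpow_pos_of_pos hn0 _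
    have hle : (n : ℝ) / 2 ≤ (n : ℝ) - mfix := by linarith
    have e3 : (n : ℝ) ^ (-(1 : ℝ) / 4) * ((n : ℝ) / 2) = (n : ℝ) ^ ((3 : ℝ) / 4) / 2 := by
      rw [← e2]; ring
    have := mul_le_mul_of_nonneg_left hle hp.le
    rw [e1]
    linarith
  refine ⟨⟨2, fun n hn => key n hn⟩, hdiv, ?_⟩
  intro mfix M
  obtain ⟨N, hN⟩ := Filter.eventually_atTop.mp ((hdiv mfix).eventually_gt_atTop M)
  refine ⟨max N 2, fun n hn => ?_⟩
  have hn2 : 2 ≤ n := le_trans (le_max_right _ _) hn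
  have hn1 : (1 : ℝ) ≤ (n : ℝ) := by exact_mod_cast le_trans one_le_two hn2
  have hn0 : (0 : ℝ) < (n : ℝ) := by linarith
  refine ⟨(n : ℝ) ^ (-(3 : ℝ) / 4), ⟨Real.rpow_pos_of_pos hn0 _,
    Real.rpow_le_one_of_one_le_of_nonpos hn1 (by norm_num)⟩, ?_⟩
  exact hN n (le_trans (le_max_left _ _) hn)
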